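/- arXiv:1811.06107 — 6 statements merged into one kernel-verified Lean document; each statement's English description precedes it below -/
import Mathlib

section
/- Let T be a bounded linear operator on a Banach space B whose powers are uniformly bounded by C, let λ₁,…,λ_k be distinct complex numbers of modulus 1 with λ₁ = 1, let T_{λ₁},…,T_{λ_k} be bounded operators with T_{λ_i} T_{λ_j} = T_{λ_i} if i = j and 0 otherwise, and let S := T − ∑_i T_{λ_i} satisfy T^n = S^n + ∑_i λ_i^n T_{λ_i} for all n ≥ 1 together with ‖S^n‖ ≤ M/(1+ε)^n. Then (1/n)∑_{i=1}^n T^i converges in operator norm to T_{λ₁} = T₁, with error bounded by a constant times 1/n. -/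
/-!
Summing the decomposition over `1 ≤ m ≤ n`, the eigenvalue `λ₁ = 1` contributes exactly `n • T₁`,
the `S`-part has norm at most `∑ M / (1 + ε) ^ m ≤ M / ε`, and for `λᵢ ≠ 1` the geometric sums
`∑ λᵢ ^ m` stay bounded by `2 / ‖λᵢ - 1‖` because `‖λᵢ‖ = 1`. So `∑_{m ≤ n} T ^ m - n • T₁` is
bounded uniformly in `n`, and dividing by `n` gives the `O(1/n)` rate.
-/

open Finset Filter Topology

theorem norm_sum_range_pow_succ_le {𝕜 : Type*} [NormedDivisionRing 𝕜] {z : 𝕜} (hz : ‖z‖ ≤ 1)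
    (hz₁ : z ≠ 1) (n : ℕ) : ‖∑ m ∈ range n, z ^ (m + 1)‖ ≤ 2 / ‖z - 1‖ := by
  have hsum : ∑ m ∈ range n, z ^ (m + 1) = z * ((z ^ n - 1) / (z - 1)) := by
    simp only [← geom_sum_eq hz₁, mul_sum, pow_succ']
  have hnum : ‖z ^ n - 1‖ ≤ 2 := calc
    ‖z ^ n - 1‖ ≤ ‖z‖ ^ n + ‖(1 : 𝕜)‖ := (norm_sub_le _ _).trans_eq (by rw [norm_pow])
    _ ≤ 2 := by rw [norm_one]; linarith [pow_le_one₀ (norm_nonneg z) hz (n := n)]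
  rw [hsum, norm_mul, norm_div]
  calc ‖z‖ * (‖z ^ n - 1‖ / ‖z - 1‖) ≤ 1 * (2 / ‖z - 1‖) := by gcongr
    _ = 2 / ‖z - 1‖ := one_mul _

theorem sum_range_div_one_add_pow_succ_le {M ε : ℝ} (hM : 0 ≤ M) (hε : 0 < ε) (n : ℕ) :
    ∑ m ∈ range n, M / (1 + ε) ^ (m + 1) ≤ M / ε := by
  set r := (1 + ε)⁻¹
  have hr : r < 1 := inv_lt_one_of_one_lt₀ (by linarith)
  have hgeom : ∑ m ∈ range n, r ^ (m + 1) ≤ r / (1 - r) := by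
    simpa [sum_Ico_eq_sum_range, add_comm] using
      geom_sum_Ico_le_of_lt_one (m := 1) (n := n + 1) (by positivity) hr
  calc ∑ m ∈ range n, M / (1 + ε) ^ (m + 1) = M * ∑ m ∈ range n, r ^ (m + 1) := by
        simp only [mul_sum, r, inv_pow, div_eq_mul_inv]
    _ ≤ M * (r / (1 - r)) := by gcongr
    _ = M / ε := by
        have h1 : 1 - r = ε * r := by
          simp only [r]
          field_simp
          ring
        rw [h1, div_mul_cancel_right₀ (by positivity), div_eq_mul_inv]

section Cesaro

variable {E : Type*} [NormedAddCommGroup E]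

theorem norm_inv_smul_sum_range_sub_le [NormedSpace ℝ E] {y : ℕ → E} {v : E} {K : ℝ} {n : ℕ}
    (hn : n ≠ 0) (h : ‖∑ m ∈ range n, y m - n • v‖ ≤ K) :
    ‖(n : ℝ)⁻¹ • ∑ m ∈ range n, y m - v‖ ≤ K / n := by
  have hn' : (n : ℝ) ≠ 0 := Nat.cast_ne_zero.mpr hn
  have : (n : ℝ)⁻¹ • ∑ m ∈ range n, y m - v = (n : ℝ)⁻¹ • (∑ m ∈ range n, y m - n • v) := by
    rw [smul_sub, ← Nat.cast_smul_eq_nsmul ℝ, smul_smul, inv_mul_cancel₀ hn', one_smul]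
  rw [this, norm_smul, norm_inv, Real.norm_natCast, inv_mul_eq_div]
  gcongr

theorem tendsto_of_norm_sub_le_div {f : ℕ → E} {a : E} {K : ℝ}
    (h : ∀ n, 1 ≤ n → ‖f n - a‖ ≤ K / n) : Tendsto f atTop (𝓝 a) := by
  rw [tendsto_iff_norm_sub_tendsto_zero]
  refine squeeze_zero' (.of_forall fun n => norm_nonneg _) ?_
    (tendsto_const_div_atTop_nhds_zero_nat K)
  filter_upwards [eventually_ge_atTop 1] with n hn using h n hn

variable [NormedSpace ℂ E] {ι : Type*} [Fintype ι] [DecidableEq ι]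

theorem sum_range_sub_nsmul_eq {x s : ℕ → E} {lam : ι → ℂ} {v : ι → E} {i₀ : ι}
    (hlam₀ : lam i₀ = 1) (hx : ∀ n, 1 ≤ n → x n = s n + ∑ i, lam i ^ n • v i) (n : ℕ) :
    ∑ m ∈ range n, x (m + 1) - n • v i₀ = ∑ m ∈ range n, s (m + 1) +
      ∑ i ∈ univ.erase i₀, (∑ m ∈ range n, lam i ^ (m + 1)) • v i := by
  have hsplit : ∑ i, (∑ m ∈ range n, lam i ^ (m + 1)) • v i = n • v i₀ +
      ∑ i ∈ univ.erase i₀, (∑ m ∈ range n, lam i ^ (m + 1)) • v i := by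
    rw [← add_sum_erase _ _ (mem_univ i₀), hlam₀]
    simp [Nat.cast_smul_eq_nsmul]
  rw [sum_congr rfl fun m _ => hx (m + 1) m.succ_pos, sum_add_distrib, sum_comm]
  simp only [← sum_smul]
  rw [hsplit]
  abel

theorem norm_sum_range_sub_nsmul_le {x s : ℕ → E} {lam : ι → ℂ} {v : ι → E} {i₀ : ι} {K : ℝ}
    (hlam₀ : lam i₀ = 1) (hlam : ∀ i, i ≠ i₀ → ‖lam i‖ ≤ 1 ∧ lam i ≠ 1)
    (hx : ∀ n, 1 ≤ n → x n = s n + ∑ i, lam i ^ n • v i)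
    (hs : ∀ n, ∑ m ∈ range n, ‖s (m + 1)‖ ≤ K) (n : ℕ) :
    ‖∑ m ∈ range n, x (m + 1) - n • v i₀‖ ≤ K + ∑ i ∈ univ.erase i₀, 2 / ‖lam i - 1‖ * ‖v i‖ := by
  rw [sum_range_sub_nsmul_eq hlam₀ hx]
  refine (norm_add_le _ _).trans (add_le_add ((norm_sum_le _ _).trans (hs n)) ?_)
  refine (norm_sum_le _ _).trans (sum_le_sum fun i hi => ?_)
  obtain ⟨hle, hne⟩ := hlam i (ne_of_mem_erase hi)
  rw [norm_smul]
  gcongr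
  exact norm_sum_range_pow_succ_le hle hne n

end Cesaro

theorem cesaro_to_spectral_projection_general
    {B : Type*} [NormedAddCommGroup B] [NormedSpace ℂ B]
    (T S : B →L[ℂ] B) (k : ℕ) (hk : 0 < k)
    (lam : Fin k → ℂ) (Tl : Fin k → B →L[ℂ] B)
    (hinj : Function.Injective lam) (hmod : ∀ i, ‖lam i‖ = 1)
    (hlam0 : lam ⟨0, hk⟩ = 1)
    (M ε : ℝ) (hM : 0 < M) (hε : 0 < ε)
    (hdecomp : ∀ n : ℕ, 1 ≤ n → T ^ n = S ^ n + ∑ i, (lam i ^ n) • Tl i)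
    (hS : ∀ n : ℕ, 1 ≤ n → ‖S ^ n‖ ≤ M / (1 + ε) ^ n) :
    Filter.Tendsto (fun n : ℕ => (n : ℝ)⁻¹ • ∑ i ∈ Finset.range n, T ^ (i + 1))
      Filter.atTop (nhds (Tl ⟨0, hk⟩)) ∧
    ∃ M' : ℝ, ∀ n : ℕ, 1 ≤ n →
      ‖(n : ℝ)⁻¹ • ∑ i ∈ Finset.range n, T ^ (i + 1) - Tl ⟨0, hk⟩‖ ≤ M' / n := by
  have hlam : ∀ i, i ≠ ⟨0, hk⟩ → ‖lam i‖ ≤ 1 ∧ lam i ≠ 1 := fun i hi =>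
    ⟨(hmod i).le, fun h => hi (hinj (h.trans hlam0.symm))⟩
  have hSsum (n : ℕ) : ∑ m ∈ range n, ‖S ^ (m + 1)‖ ≤ M / ε :=
    (sum_le_sum fun m _ => hS (m + 1) m.succ_pos).trans
      (sum_range_div_one_add_pow_succ_le hM.le hε n)
  have hbound (n : ℕ) (hn : 1 ≤ n) :
      ‖(n : ℝ)⁻¹ • ∑ i ∈ range n, T ^ (i + 1) - Tl ⟨0, hk⟩‖ ≤
        (M / ε + ∑ i ∈ univ.erase ⟨0, hk⟩, 2 / ‖lam i - 1‖ * ‖Tl i‖) / n :=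
    norm_inv_smul_sum_range_sub_le (by omega)
      (norm_sum_range_sub_nsmul_le hlam0 hlam hdecomp hSsum n)
  exact ⟨tendsto_of_norm_sub_le_div hbound, _, hbound⟩

/-- Under the spectral decomposition `T^n = S^n + ∑_i λ_i^n T_{λ_i}` with distinct unimodular
`λ_i`, `λ_1 = 1`, projections `T_{λ_i} T_{λ_j} = δ_{ij} T_{λ_i}`, uniformly bounded powers of `T`,
and `‖S^n‖ ≤ M/(1+ε)^n`, the Cesàro averages `(1/n) ∑_{i=1}^n T^i` converge in operator norm
to `T_{λ_1} = T₁` with error `O(1/n)`. -/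
theorem cesaro_to_spectral_projection
    {B : Type*} [NormedAddCommGroup B] [NormedSpace ℂ B] [CompleteSpace B]
    (T S : B →L[ℂ] B) (k : ℕ) (hk : 0 < k)
    (lam : Fin k → ℂ) (Tl : Fin k → B →L[ℂ] B)
    (hinj : Function.Injective lam) (hmod : ∀ i, ‖lam i‖ = 1)
    (hlam0 : lam ⟨0, hk⟩ = 1)
    (C M ε : ℝ) (hM : 0 < M) (hε : 0 < ε)
    (hC : ∀ n : ℕ, ‖T ^ n‖ ≤ C)
    (hdecomp : ∀ n : ℕ, 1 ≤ n → T ^ n = S ^ n + ∑ i, (lam i ^ n) • Tl i)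
    (horth : ∀ i j, (Tl i).comp (Tl j) = if i = j then Tl i else 0)
    (hS : ∀ n : ℕ, 1 ≤ n → ‖S ^ n‖ ≤ M / (1 + ε) ^ n) :
    Filter.Tendsto (fun n : ℕ => (n : ℝ)⁻¹ • ∑ i ∈ Finset.range n, T ^ (i + 1))
      Filter.atTop (nhds (Tl ⟨0, hk⟩)) ∧
    ∃ M' : ℝ, ∀ n : ℕ, 1 ≤ n →
      ‖(n : ℝ)⁻¹ • ∑ i ∈ Finset.range n, T ^ (i + 1) - Tl ⟨0, hk⟩‖ ≤ M' / n :=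
  cesaro_to_spectral_projection_general T S k hk lam Tl hinj hmod hlam0 M ε hM hε hdecomp hS
end

section
/- Let p be a Markov kernel on (X, 𝒳), let x* ∈ X with the singleton {x*} measurable, and suppose there exist n ∈ ℕ and ε > 0 such that the n-step kernel satisfies p^{(n)}(x, {x*}) ≥ ε for all x ∈ X. Then any two probability measures invariant under p coincide; i.e., the invariant probability measure, if it exists, is unique. -/
/-!
Invariance under `p` passes to `κ = p^{(n)}`. For invariant probability measures `μ₁, μ₂`,
write `μ₁ - μ₂ = ν₁ - ν₂` with `ν₁ ⟂ ν₂` carried by a Hahn set `S` and by `Sᶜ`. If `x* ∈ S`, then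
`κ(x, S) ≥ ε` for every `x`, and evaluating the `κ`-invariance of `μ₁ - μ₂` at `S` gives
`ν₁(S) = ∫ κ(·, S) d(ν₁ - ν₂) ≤ ν₁(S) - ε ν₂(X)`, so `ν₂ = 0` and `μ₂ ≤ μ₁`. If `x* ∉ S`, the same
argument with `Sᶜ` gives `μ₁ ≤ μ₂`. Comparable probability measures are equal.
-/

open MeasureTheory ProbabilityTheory

/-- The `n`-step transition kernel: `stepN p 0 = id`, `stepN p (n+1) (x, E) = ∫ p(x,dy) stepN p n (y, E)`. -/
noncomputable def stepN {X : Type*} [MeasurableSpace X] (p : Kernel X X) : ℕ → Kernel X X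
  | 0 => Kernel.id
  | n + 1 => (stepN p n).comp p

namespace MeasureTheory.Measure

variable {X : Type*} [MeasurableSpace X] {μ ν : Measure X} [IsFiniteMeasure μ] [IsFiniteMeasure ν]

lemma sub_eq_zero_iff_le : μ - ν = 0 ↔ μ ≤ ν :=
  ⟨fun h => by simpa using sub_le_iff_le_add.1 h.le, sub_eq_zero_of_le⟩

lemma add_sub_eq_add_sub : μ + (ν - μ) = ν + (μ - ν) := by
  rw [← toSignedMeasure_eq_toSignedMeasure_iff, toSignedMeasure_add, toSignedMeasure_add,
    add_comm ν.toSignedMeasure]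
  exact sub_eq_sub_iff_add_eq_add.mp sub_toSignedMeasure_eq_toSignedMeasure_sub

end MeasureTheory.Measure

instance isMarkovKernel_stepN {X : Type*} [MeasurableSpace X] (p : Kernel X X) [IsMarkovKernel p] :
    ∀ n, IsMarkovKernel (stepN p n)
  | 0 => by rw [stepN]; infer_instance
  | n + 1 => by
      have := isMarkovKernel_stepN p n
      rw [stepN]; infer_instance

namespace ProbabilityTheory.Kernel

variable {X : Type*} [MeasurableSpace X] {κ : Kernel X X} {μ : Measure X}

lemma invariant_iff : κ.Invariant μ ↔ ∀ E, MeasurableSet E → μ E = ∫⁻ x, κ x E ∂μ := by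
  refine ⟨fun h E hE => ?_, fun h => ?_⟩
  · conv_lhs => rw [← h.def]
    exact Measure.bind_apply hE κ.aemeasurable
  · ext E hE
    rw [Measure.bind_apply hE κ.aemeasurable, ← h E hE]

lemma Invariant.stepN {p : Kernel X X} (h : p.Invariant μ) : ∀ n, (_root_.stepN p n).Invariant μ
  | 0 => Measure.bind_dirac
  | n + 1 => (h.stepN n).comp h

lemma Invariant.eq_zero_of_add_eq_add_of_le_apply [IsMarkovKernel κ]
    {μ₁ μ₂ ν₁ ν₂ : Measure X} [IsFiniteMeasure μ₁] (h₁ : κ.Invariant μ₁) (h₂ : κ.Invariant μ₂)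
    (h : μ₁ + ν₂ = μ₂ + ν₁) {S : Set X} (hS : MeasurableSet S) (hν₁ : ν₁ Sᶜ = 0)
    (hν₂ : ν₂ S = 0) {ε : ENNReal} (hε : 0 < ε) (hκ : ∀ x, ε ≤ κ x S) : ν₂ = 0 := by
  have hμS : μ₁ S = μ₂ S + ν₁ S := by
    simpa [hν₂] using congrArg (fun μ : Measure X => μ S) h
  have hν₁S : ∫⁻ x, κ x S ∂ν₁ ≤ ν₁ S :=
    calc ∫⁻ x, κ x S ∂ν₁ ≤ ∫⁻ _, 1 ∂ν₁ := lintegral_mono fun x => prob_le_one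
      _ = ν₁ Set.univ := lintegral_one
      _ ≤ ν₁ S + ν₁ Sᶜ := measure_univ_le_add_compl S
      _ = ν₁ S := by rw [hν₁, add_zero]
  have hν₂S : ∫⁻ x, κ x S ∂ν₂ = 0 := by
    refine le_antisymm ((ENNReal.add_le_add_iff_left (measure_ne_top μ₁ S)).1 ?_) zero_le
    calc μ₁ S + ∫⁻ x, κ x S ∂ν₂ = μ₂ S + ∫⁻ x, κ x S ∂ν₁ := by
          rw [invariant_iff.1 h₁ S hS, invariant_iff.1 h₂ S hS, ← lintegral_add_measure, h,
            lintegral_add_measure]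
      _ ≤ μ₂ S + ν₁ S := by gcongr
      _ = μ₁ S + 0 := by rw [hμS, add_zero]
  have hεν₂ : ε * ν₂ Set.univ ≤ 0 :=
    calc ε * ν₂ Set.univ = ∫⁻ _, ε ∂ν₂ := (MeasureTheory.lintegral_const ε).symm
      _ ≤ ∫⁻ x, κ x S ∂ν₂ := lintegral_mono hκ
      _ = 0 := hν₂S
  rw [← Measure.measure_univ_eq_zero]
  simpa [hε.ne'] using hεν₂

theorem Invariant.eq_of_le_apply_singleton [IsMarkovKernel κ]
    {μ₁ μ₂ : Measure X} [IsProbabilityMeasure μ₁] [IsProbabilityMeasure μ₂]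
    (h₁ : κ.Invariant μ₁) (h₂ : κ.Invariant μ₂) {x₀ : X} {ε : ENNReal} (hε : 0 < ε)
    (hκ : ∀ x, ε ≤ κ x {x₀}) : μ₁ = μ₂ := by
  obtain ⟨S, hS, h₁₂, h₂₁⟩ := Measure.mutually_singular_measure_sub (μ := μ₁) (ν := μ₂)
  have hle : ∀ T, x₀ ∈ T → ∀ x, ε ≤ κ x T := fun T hT x =>
    (hκ x).trans (measure_mono (Set.singleton_subset_iff.2 hT))
  by_cases hx : x₀ ∈ S
  · have hsub := h₂.eq_zero_of_add_eq_add_of_le_apply h₁ Measure.add_sub_eq_add_sub hS h₂₁ h₁₂ hε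
      (hle S hx)
    exact Measure.eq_of_le_of_isProbabilityMeasure (Measure.sub_eq_zero_iff_le.1 hsub)
  · have hsub := h₁.eq_zero_of_add_eq_add_of_le_apply h₂ Measure.add_sub_eq_add_sub hS.compl
      (by rwa [compl_compl]) h₂₁ hε (hle Sᶜ hx)
    exact (Measure.eq_of_le_of_isProbabilityMeasure (Measure.sub_eq_zero_iff_le.1 hsub)).symm

end ProbabilityTheory.Kernel

theorem invariant_measure_unique_of_minorization_general
    {X : Type*} [MeasurableSpace X]
    (p : Kernel X X) [IsMarkovKernel p]
    (xstar : X) (n : ℕ) (ε : ENNReal) (hε : 0 < ε)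
    (hmin : ∀ x : X, ε ≤ stepN p n x {xstar})
    (μ₁ μ₂ : Measure X) [IsProbabilityMeasure μ₁] [IsProbabilityMeasure μ₂]
    (hinv₁ : ∀ E : Set X, MeasurableSet E → μ₁ E = ∫⁻ x, p x E ∂μ₁)
    (hinv₂ : ∀ E : Set X, MeasurableSet E → μ₂ E = ∫⁻ x, p x E ∂μ₂) :
    μ₁ = μ₂ :=
  ((Kernel.invariant_iff.2 hinv₁).stepN n).eq_of_le_apply_singleton
    ((Kernel.invariant_iff.2 hinv₂).stepN n) hε hmin

/-- If the `n`-step kernel satisfies `p^{(n)}(x, {x*}) ≥ ε > 0` for all `x`, then any two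
invariant probability measures coincide. -/
theorem invariant_measure_unique_of_minorization
    {X : Type*} [MeasurableSpace X] [MeasurableSingletonClass X]
    (p : Kernel X X) [IsMarkovKernel p]
    (xstar : X) (n : ℕ) (ε : ENNReal) (hε : 0 < ε)
    (hmin : ∀ x : X, ε ≤ stepN p n x {xstar})
    (μ₁ μ₂ : Measure X) [IsProbabilityMeasure μ₁] [IsProbabilityMeasure μ₂]
    (hinv₁ : ∀ E : Set X, MeasurableSet E → μ₁ E = ∫⁻ x, p x E ∂μ₁)
    (hinv₂ : ∀ E : Set X, MeasurableSet E → μ₂ E = ∫⁻ x, p x E ∂μ₂) :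
    μ₁ = μ₂ :=
  invariant_measure_unique_of_minorization_general p xstar n ε hε hmin μ₁ μ₂ hinv₁ hinv₂
end

section
/- Under Doeblin's condition p(x,E) ≥ ε μ(E) for all x, E (with 0 < ε ≤ 1 and μ a probability measure), the induced operator T on signed measures satisfies: for any two probability measures ν₁, ν₂, ‖T ν₁ − T ν₂‖_TV ≤ (1 − ε) ‖ν₁ − ν₂‖_TV, where ‖·‖_TV denotes the total variation norm. Consequently T has at most one invariant probability measure. -/
open MeasureTheory ProbabilityTheory
open scoped ENNReal

/-!
Let `ν₁ - ν₂ = α - β` be the Jordan decomposition. Equal total masses give `α X = β X = t`, so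
`‖ν₁ - ν₂‖ = 2t`, and `Tν₁ - Tν₂ = Tα - Tβ`. Doeblin's condition makes both `Tα` and `Tβ`
dominate the common measure `ε t μ`; removing it leaves two measures of mass `(1 - ε) t`, so
`‖Tν₁ - Tν₂‖ ≤ 2 (1 - ε) t`. Since `1 - ε < 1`, two invariant probability measures are at
total variation distance `0`.
-/

lemma ENNReal.eq_zero_of_le_mul_of_lt_one {d r : ℝ≥0∞} (hr : r < 1) (hd : d ≠ ⊤)
    (h : d ≤ r * d) : d = 0 := by
  by_contra hd0
  have : r * d < 1 * d := ENNReal.mul_lt_mul_left hd0 hd hr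
  rw [one_mul] at this
  exact this.not_ge h

namespace MeasureTheory

variable {X : Type*} [MeasurableSpace X]

lemma Measure.toSignedMeasure_sub_eq_sub_iff (α β γ δ : Measure X) [IsFiniteMeasure α]
    [IsFiniteMeasure β] [IsFiniteMeasure γ] [IsFiniteMeasure δ] :
    α.toSignedMeasure - β.toSignedMeasure = γ.toSignedMeasure - δ.toSignedMeasure ↔
      α + δ = γ + β := by
  rw [sub_eq_sub_iff_add_eq_add, ← Measure.toSignedMeasure_add, ← Measure.toSignedMeasure_add,
    Measure.toSignedMeasure_eq_toSignedMeasure_iff]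

lemma SignedMeasure.totalVariation_toSignedMeasure_sub_le (α β : Measure X) [IsFiniteMeasure α]
    [IsFiniteMeasure β] : (α.toSignedMeasure - β.toSignedMeasure).totalVariation ≤ α + β := by
  rw [SignedMeasure.totalVariation_eq_variation]
  refine VectorMeasure.variation_le_of_forall_enorm_le fun E hE => ?_
  rw [Measure.toSignedMeasure_sub_apply hE, Measure.add_apply]
  calc ‖α.real E - β.real E‖ₑ ≤ ‖α.real E‖ₑ + ‖β.real E‖ₑ := enorm_sub_le
    _ = α E + β E := by
      simp [Real.enorm_of_nonneg, measureReal_nonneg]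

lemma SignedMeasure.eq_zero_of_totalVariation_univ_eq_zero {s : SignedMeasure X}
    (h : s.totalVariation Set.univ = 0) : s = 0 := by
  rwa [← VectorMeasure.variation_eq_zero, ← SignedMeasure.totalVariation_eq_variation,
    ← Measure.measure_univ_eq_zero]

lemma Measure.eq_of_totalVariation_le_mul {m₁ m₂ : Measure X} [IsFiniteMeasure m₁]
    [IsFiniteMeasure m₂] {r : ℝ≥0∞} (hr : r < 1)
    (h : (m₁.toSignedMeasure - m₂.toSignedMeasure).totalVariation Set.univ ≤
      r * (m₁.toSignedMeasure - m₂.toSignedMeasure).totalVariation Set.univ) :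
    m₁ = m₂ :=
  Measure.toSignedMeasure_eq_toSignedMeasure_iff.1 <| sub_eq_zero.1 <|
    SignedMeasure.eq_zero_of_totalVariation_univ_eq_zero <|
      ENNReal.eq_zero_of_le_mul_of_lt_one hr (measure_ne_top _ _) h

end MeasureTheory

namespace ProbabilityTheory

open Set

variable {X Y : Type*} [MeasurableSpace X] [MeasurableSpace Y] {p : Kernel X Y} {μ : Measure Y}
  {c : ℝ≥0∞}

lemma smul_le_comp_of_forall_smul_le (hp : ∀ x, c • μ ≤ p x) (α : Measure X) :
    (c * α univ) • μ ≤ p ∘ₘ α := by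
  refine Measure.le_iff.2 fun E hE => ?_
  rw [Measure.bind_apply hE p.aemeasurable, Measure.smul_apply, smul_eq_mul]
  calc c * α univ * μ E = ∫⁻ _, c * μ E ∂α := by rw [lintegral_const]; ring
    _ ≤ ∫⁻ x, p x E ∂α := lintegral_mono fun x => hp x E

lemma exists_comp_eq_smul_add [IsMarkovKernel p] [IsProbabilityMeasure μ]
    (hp : ∀ x, c • μ ≤ p x) (α : Measure X) [IsFiniteMeasure α] :
    ∃ σ : Measure Y, ∃ _ : IsFiniteMeasure σ,
      p ∘ₘ α = (c * α univ) • μ + σ ∧ σ univ = (1 - c) * α univ := by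
  have hle := smul_le_comp_of_forall_smul_le hp α
  have : IsFiniteMeasure ((c * α univ) • μ) := isFiniteMeasure_of_le _ hle
  set σ := p ∘ₘ α - (c * α univ) • μ
  have hσ : p ∘ₘ α = (c * α univ) • μ + σ := by
    rw [add_comm, Measure.sub_add_cancel_of_le hle]
  refine ⟨σ, isFiniteMeasure_of_le _ Measure.sub_le, hσ, ?_⟩
  have hmass := congrArg (· univ) hσ
  simp only [Measure.comp_apply_univ, Measure.add_apply, Measure.smul_apply, measure_univ,
    smul_eq_mul, mul_one] at hmass
  rw [ENNReal.sub_mul fun _ _ => measure_ne_top α univ, one_mul]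
  exact ENNReal.eq_sub_of_add_eq (by simpa using measure_ne_top ((c * α univ) • μ) univ)
    (by rw [add_comm, ← hmass])

theorem totalVariation_comp_sub_le [IsMarkovKernel p] [IsProbabilityMeasure μ]
    (hp : ∀ x, c • μ ≤ p x) (ν₁ ν₂ : Measure X) [IsFiniteMeasure ν₁] [IsFiniteMeasure ν₂]
    (hν : ν₁ univ = ν₂ univ) :
    ((p ∘ₘ ν₁).toSignedMeasure - (p ∘ₘ ν₂).toSignedMeasure).totalVariation univ ≤
      (1 - c) * (ν₁.toSignedMeasure - ν₂.toSignedMeasure).totalVariation univ := by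
  set s := ν₁.toSignedMeasure - ν₂.toSignedMeasure
  set α := s.toJordanDecomposition.posPart
  set β := s.toJordanDecomposition.negPart
  have hcoupling : ν₁ + β = α + ν₂ :=
    (Measure.toSignedMeasure_sub_eq_sub_iff _ _ _ _).1
      s.toSignedMeasure_toJordanDecomposition.symm
  have hmass : α univ = β univ := by
    have := congrArg (· univ) hcoupling
    simp only [Measure.add_apply, hν] at this
    rw [add_comm] at this
    exact (ENNReal.add_left_inj (measure_ne_top ν₂ univ)).1 this.symm
  obtain ⟨σ₁, _, hα, hσ₁⟩ := exists_comp_eq_smul_add hp α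
  obtain ⟨σ₂, _, hβ, hσ₂⟩ := exists_comp_eq_smul_add hp β
  have himage : (p ∘ₘ ν₁).toSignedMeasure - (p ∘ₘ ν₂).toSignedMeasure =
      σ₁.toSignedMeasure - σ₂.toSignedMeasure := by
    calc _ = (p ∘ₘ α).toSignedMeasure - (p ∘ₘ β).toSignedMeasure := by
          rw [Measure.toSignedMeasure_sub_eq_sub_iff, ← Measure.comp_add, hcoupling,
            Measure.comp_add]
      _ = σ₁.toSignedMeasure - σ₂.toSignedMeasure := by
          rw [Measure.toSignedMeasure_sub_eq_sub_iff, hα, hβ, hmass]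
          abel
  calc ((p ∘ₘ ν₁).toSignedMeasure - (p ∘ₘ ν₂).toSignedMeasure).totalVariation univ
      ≤ σ₁ univ + σ₂ univ := by
        rw [himage, ← Measure.add_apply]
        exact SignedMeasure.totalVariation_toSignedMeasure_sub_le σ₁ σ₂ univ
    _ = (1 - c) * (α univ + β univ) := by rw [hσ₁, hσ₂, mul_add]
    _ = (1 - c) * s.totalVariation univ := rfl

end ProbabilityTheory

theorem doeblin_contraction_and_uniqueness_general
    {X : Type*} [MeasurableSpace X] (p : Kernel X X) [IsMarkovKernel p]
    (μ : Measure X) [IsProbabilityMeasure μ] (ε : ℝ) (hε0 : 0 < ε)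
    (hdoeblin : ∀ (x : X) (E : Set X), MeasurableSet E →
      ENNReal.ofReal ε * μ E ≤ p x E)
    (ν₁ ν₂ : Measure X) [IsProbabilityMeasure ν₁] [IsProbabilityMeasure ν₂] :
    (((ν₁.bind p).toSignedMeasure - (ν₂.bind p).toSignedMeasure).totalVariation Set.univ
      ≤ ENNReal.ofReal (1 - ε) *
        ((ν₁.toSignedMeasure - ν₂.toSignedMeasure).totalVariation Set.univ)) ∧
    (∀ m₁ m₂ : Measure X, IsProbabilityMeasure m₁ → IsProbabilityMeasure m₂ →
      m₁.bind p = m₁ → m₂.bind p = m₂ → m₁ = m₂) := by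
  have hp : ∀ x, ENNReal.ofReal ε • μ ≤ p x := fun x => Measure.le_iff.2 (hdoeblin x)
  have hfactor : 1 - ENNReal.ofReal ε = ENNReal.ofReal (1 - ε) := by
    rw [ENNReal.ofReal_sub 1 hε0.le, ENNReal.ofReal_one]
  have hcontract (m₁ m₂ : Measure X) [IsProbabilityMeasure m₁] [IsProbabilityMeasure m₂] :
      ((p ∘ₘ m₁).toSignedMeasure - (p ∘ₘ m₂).toSignedMeasure).totalVariation Set.univ
        ≤ ENNReal.ofReal (1 - ε) *
          (m₁.toSignedMeasure - m₂.toSignedMeasure).totalVariation Set.univ :=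
    hfactor ▸ totalVariation_comp_sub_le hp m₁ m₂ (by simp)
  refine ⟨hcontract ν₁ ν₂, fun m₁ m₂ _ _ hm₁ hm₂ => ?_⟩
  refine Measure.eq_of_totalVariation_le_mul (ENNReal.ofReal_lt_one.2 (sub_lt_self 1 hε0)) ?_
  simpa only [Measure.toSignedMeasure_congr hm₁, Measure.toSignedMeasure_congr hm₂]
    using hcontract m₁ m₂

/-- Under Doeblin's condition `p(x,E) ≥ ε μ(E)` (with `0 < ε ≤ 1`), the induced operator
`T : ν ↦ ν.bind p` contracts the total variation distance between probability measures by
the factor `1 - ε`, and consequently has at most one invariant probability measure. -/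
theorem doeblin_contraction_and_uniqueness
    {X : Type*} [MeasurableSpace X] (p : Kernel X X) [IsMarkovKernel p]
    (μ : Measure X) [IsProbabilityMeasure μ] (ε : ℝ) (hε0 : 0 < ε) (hε1 : ε ≤ 1)
    (hdoeblin : ∀ (x : X) (E : Set X), MeasurableSet E →
      ENNReal.ofReal ε * μ E ≤ p x E)
    (ν₁ ν₂ : Measure X) [IsProbabilityMeasure ν₁] [IsProbabilityMeasure ν₂]
    [IsFiniteMeasure (ν₁.bind p)] [IsFiniteMeasure (ν₂.bind p)] :
    (((ν₁.bind p).toSignedMeasure - (ν₂.bind p).toSignedMeasure).totalVariation Set.univ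
      ≤ ENNReal.ofReal (1 - ε) *
        ((ν₁.toSignedMeasure - ν₂.toSignedMeasure).totalVariation Set.univ)) ∧
    (∀ m₁ m₂ : Measure X, IsProbabilityMeasure m₁ → IsProbabilityMeasure m₂ →
      m₁.bind p = m₁ → m₂.bind p = m₂ → m₁ = m₂) :=
  doeblin_contraction_and_uniqueness_general p μ ε hε0 hdoeblin ν₁ ν₂
end

section
/- Let p be a Markov kernel on (X, 𝒳), x* ∈ X, and ε ∈ (0,1) such that p(x, {x*}) ≥ ε for all x ∈ X. Define T on signed measures by Tμ = ∫ p(x, ·) μ(dx) and V by Vμ = ε·μ(X)·δ_{x*}. Then for every probability measure μ, ‖(T − V)μ‖_TV ≤ 1 − ε < 1, and hence ‖T − V‖ restricted to the cone of probability measures is strictly less than 1. -/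
open MeasureTheory ProbabilityTheory

/-! The minorisation `p(x, {x*}) ≥ ε` gives `ε δ_{x*} ≤ μ.bind p` as measures, so
`μ.bind p - ε δ_{x*}` is itself a positive measure; its total variation is its mass `1 - ε`. -/

namespace MeasureTheory.Measure

variable {α β : Type*} [MeasurableSpace α] [MeasurableSpace β]

theorem totalVariation_toSignedMeasure_sub_of_le {μ ν : Measure α} [IsFiniteMeasure μ]
    [IsFiniteMeasure ν] (h : ν ≤ μ) :
    (μ.toSignedMeasure - ν.toSignedMeasure).totalVariation = μ - ν := by
  rw [SignedMeasure.totalVariation, toJordanDecomposition_toSignedMeasure_sub,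
    jordanDecompositionOfToSignedMeasureSub_posPart,
    jordanDecompositionOfToSignedMeasureSub_negPart, sub_eq_zero_of_le h, add_zero]

theorem smul_dirac_le_bind (μ : Measure α) [IsProbabilityMeasure μ] (κ : Kernel α β)
    {c : NNReal} {b : β} (h : ∀ a, (c : ENNReal) ≤ κ a {b}) : c • dirac b ≤ μ.bind κ := by
  refine Measure.le_iff.2 fun s hs => ?_
  rw [smul_apply, dirac_apply' _ hs, bind_apply hs κ.aemeasurable]
  by_cases hb : b ∈ s
  · calc c • s.indicator 1 b = ∫⁻ _, (c : ENNReal) ∂μ := by simp [hb]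
      _ ≤ ∫⁻ a, κ a s ∂μ :=
        lintegral_mono fun a => (h a).trans (measure_mono (Set.singleton_subset_iff.2 hb))
  · simp [hb]

end MeasureTheory.Measure

theorem T_minus_V_contracts_general
    {X : Type*} [MeasurableSpace X]
    (p : Kernel X X) [IsMarkovKernel p]
    (xstar : X) (ε : ℝ) (hε0 : 0 < ε)
    (hmin : ∀ x : X, ENNReal.ofReal ε ≤ p x {xstar})
    (μ : Measure X) [IsProbabilityMeasure μ] [IsFiniteMeasure (μ.bind p)] :
    ((μ.bind p).toSignedMeasure
        - ε • (Measure.dirac xstar).toSignedMeasure).totalVariation Set.univ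
      ≤ ENNReal.ofReal (1 - ε) := by
  have hle : ε.toNNReal • Measure.dirac xstar ≤ μ.bind p := Measure.smul_dirac_le_bind μ p hmin
  have : IsProbabilityMeasure (μ.bind p) :=
    isProbabilityMeasure_bind p.aemeasurable (.of_forall fun _ => inferInstance)
  have hsmul : ε • (Measure.dirac xstar).toSignedMeasure
      = (ε.toNNReal • Measure.dirac xstar).toSignedMeasure := by
    rw [Measure.toSignedMeasure_smul, NNReal.smul_def, Real.coe_toNNReal _ hε0.le]
  rw [hsmul, Measure.totalVariation_toSignedMeasure_sub_of_le hle, Measure.sub_apply .univ hle,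
    measure_univ, ENNReal.ofReal_sub _ hε0.le]
  simp [ENNReal.ofReal]

/-- If `p(x, {x*}) ≥ ε` for all `x`, then for every probability measure `μ`, the signed
measure `(T - V)μ = μ.bind p - ε δ_{x*}` has total variation norm at most `1 - ε < 1`,
where `V μ = ε · μ(X) · δ_{x*}`. -/
theorem T_minus_V_contracts
    {X : Type*} [MeasurableSpace X] [MeasurableSingletonClass X]
    (p : Kernel X X) [IsMarkovKernel p]
    (xstar : X) (ε : ℝ) (hε0 : 0 < ε) (hε1 : ε < 1)
    (hmin : ∀ x : X, ENNReal.ofReal ε ≤ p x {xstar})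
    (μ : Measure X) [IsProbabilityMeasure μ] [IsFiniteMeasure (μ.bind p)] :
    ((μ.bind p).toSignedMeasure
        - ε • (Measure.dirac xstar).toSignedMeasure).totalVariation Set.univ
      ≤ ENNReal.ofReal (1 - ε) :=
  T_minus_V_contracts_general p xstar ε hε0 hmin μ
end

section
/- Suppose the kernel p₁(t, E) = ∑_{α=1}^l y_α(t) ν_α(E), where ν_1,…,ν_l are mutually singular probability measures, y_1,…,y_l are nonnegative measurable functions with ∑_α y_α ≡ 1, and ∫ y_β dν_α = δ_{αβ}. Then the probability measures invariant under p₁ in the sense μ(E) = ∫ p₁(t,E) μ(dt) are exactly the convex combinations ∑_α c_α ν_α with c_α ≥ 0, ∑ c_α = 1. -/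
open MeasureTheory

/-- For the kernel `p₁(t,E) = ∑_α y_α(t) ν_α(E)` with mutually singular probability measures
`ν_α`, nonnegative `y_α` summing to `1` with `∫ y_β dν_α = δ_{αβ}`, the invariant probability
measures are exactly the convex combinations `∑_α c_α ν_α`. -/
theorem invariant_measures_of_decomposed_kernel
    {X : Type*} [MeasurableSpace X] (l : ℕ)
    (ν : Fin l → Measure X) (hν : ∀ α, IsProbabilityMeasure (ν α))
    (hsing : Pairwise fun α β => ν α ⟂ₘ ν β)
    (y : Fin l → X → ENNReal) (hymeas : ∀ α, Measurable (y α))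
    (hyle : ∀ α x, y α x ≤ 1)
    (hysum : ∀ x, ∑ α, y α x = 1)
    (hbiorth : ∀ α β, ∫⁻ x, y β x ∂(ν α) = if α = β then 1 else 0)
    (μ : Measure X) [IsProbabilityMeasure μ] :
    (∀ E : Set X, MeasurableSet E → μ E = ∫⁻ t, ∑ α, y α t * ν α E ∂μ) ↔
      ∃ c : Fin l → ENNReal, (∑ α, c α = 1) ∧ μ = ∑ α, c α • ν α := by
  constructor
  · intro h
    refine ⟨fun α => ∫⁻ x, y α x ∂μ, ?_, ?_⟩
    · rw [← lintegral_finset_sum _ fun α _ => hymeas α]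
      simp [hysum]
    · ext E hE
      rw [h E hE, lintegral_finset_sum _ fun α _ => (hymeas α).mul_const _]
      simp [Measure.finset_sum_apply, Measure.smul_apply, smul_eq_mul,
        lintegral_mul_const _ (hymeas _)]
  · rintro ⟨c, hc, rfl⟩ E hE
    have hint : ∀ α, ∫⁻ x, y α x ∂(∑ β, c β • ν β) = c α := by
      intro α
      rw [lintegral_finset_sum_measure]
      simp [lintegral_smul_measure, hbiorth, eq_comm]
    rw [lintegral_finset_sum _ fun α _ => (hymeas α).mul_const _]
    simp [Measure.finset_sum_apply, Measure.smul_apply, smul_eq_mul,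
      lintegral_mul_const _ (hymeas _), hint]
end

section
/- Suppose f : X × E → X, x* ∈ X, e* ∈ E, and n ∈ ℕ are such that the n-fold iterate with constant shock e* satisfies f^{(n)}(x, e*) = x* for all x ∈ X, and a Markov kernel q on E satisfies q(e, {e*}) ≥ ε > 0 for all e. Then the induced state kernel p(x,A) = q(π(x), {e : f(x,e) ∈ A}) satisfies p^{(n)}(x, {x*}) ≥ ε^n for every x ∈ X. -/
open MeasureTheory ProbabilityTheory

/-- Iterates of the evolution law with a constant shock: `f^{(0)}(x,e) = x`,
`f^{(k+1)}(x,e) = f(f^{(k)}(x,e), e)` (so `f^{(1)} = f`). -/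
def fIter {X E : Type*} (f : X → E → X) : ℕ → X → E → X
  | 0, x, _ => x
  | k + 1, x, e => f (fIter f k x e) e

/-- If the `n`-fold iterate with constant shock `e*` sends every state to `x*`, and
`q(e, {e*}) ≥ ε` for all `e`, then the induced state kernel satisfies
`p^{(n)}(x, {x*}) ≥ ε^n` for every `x`. -/
theorem induced_kernel_minorization
    {E X : Type*} [MeasurableSpace E] [MeasurableSpace X]
    [MeasurableSingletonClass E] [MeasurableSingletonClass X]
    (q : Kernel E E) [IsMarkovKernel q]
    (estar : E) (ε : ENNReal) (hε : 0 < ε) (hq : ∀ e : E, ε ≤ q e {estar})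
    (f : X → E → X) (hf : ∀ x, Measurable (f x))
    (xstar : X) (n : ℕ) (hiter : ∀ x : X, fIter f n x estar = xstar)
    (π : X → E) (p : Kernel X X) [IsMarkovKernel p]
    (hp : ∀ (x : X) (A : Set X), MeasurableSet A → p x A = q (π x) {e : E | f x e ∈ A}) :
    ∀ x : X, ε ^ n ≤ stepN p n x {xstar} := by
  have comm : ∀ (k : ℕ) (x : X) (e : E), fIter f (k+1) x e = fIter f k (f x e) e := by
    intro k
    induction k with
    | zero => intro x e; rfl
    | succ k ih =>
      intro x e
      show f (fIter f (k+1) x e) e = _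
      rw [ih]
      rfl
  have hpx : ∀ x : X, ε ≤ p x {f x estar} := by
    intro x
    rw [hp x _ (measurableSet_singleton _)]
    refine le_trans (hq (π x)) (measure_mono ?_)
    intro e he
    rcases he with rfl
    simp
  have key : ∀ (k : ℕ) (x : X), ε ^ k ≤ stepN p k x {fIter f k x estar} := by
    intro k
    induction k with
    | zero =>
      intro x
      simp [stepN, Kernel.id_apply, fIter]
    | succ k ih =>
      intro x
      rw [comm]
      have hmeas : MeasurableSet ({fIter f k (f x estar) estar} : Set X) :=
        measurableSet_singleton _
      have hstep : stepN p (k+1) x {fIter f k (f x estar) estar}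
          = ∫⁻ y, stepN p k y {fIter f k (f x estar) estar} ∂(p x) := by
        show ((stepN p k).comp p) x _ = _
        rw [Kernel.comp_apply' _ _ _ hmeas]
      rw [hstep]
      have hle : ∫⁻ y in {f x estar}, stepN p k y {fIter f k (f x estar) estar} ∂(p x)
          ≤ ∫⁻ y, stepN p k y {fIter f k (f x estar) estar} ∂(p x) :=
        setLIntegral_le_lintegral _ _
      rw [lintegral_singleton] at hle
      refine le_trans ?_ hle
      calc ε ^ (k+1) = ε ^ k * ε := pow_succ ε k
        _ ≤ stepN p k (f x estar) {fIter f k (f x estar) estar} * p x {f x estar} := by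
            gcongr
            · exact ih (f x estar)
            · exact hpx x
  intro x
  have := key n x
  rwa [hiter x] at this
end
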